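/- arXiv:1905.04298 — 2 statements merged into one kernel-verified Lean document; each statement's English description precedes it below -/
import Mathlib

section
/- Let Γ ⊆ R^{ab} be the ℤ-submodule generated by the 3n classes (βⁱ)·[aⁿ], (αⁱ)·[bⁿ] and (αⁱ)·[(ab)ⁿ] for 0 ≤ i ≤ n−1. Then the (n−1)(n−2) classes (αⁱβʲ)·[[b,a]] mod Γ, for 0 ≤ i ≤ n−2 and 0 ≤ j ≤ n−3, form a ℤ-basis of the quotient R^{ab}/Γ (the first homology of the closed Fermat curve of exponent n). -/
namespace Fermat

open scoped commutatorElement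

/-- The free group on two generators. -/
abbrev F2 : Type := FreeGroup (Fin 2)

/-- The first generator `a` of `F₂`. -/
def a : F2 := FreeGroup.of 0

/-- The second generator `b` of `F₂`. -/
def b : F2 := FreeGroup.of 1

/-- The group `H₀ = (ℤ/nℤ) × (ℤ/nℤ)`, written multiplicatively. -/
abbrev H0 (n : ℕ) : Type := Multiplicative (ZMod n × ZMod n)

/-- The homomorphism `φ : F₂ → (ℤ/nℤ) × (ℤ/nℤ)` with `φ(a) = (1,0)`, `φ(b) = (0,1)`. -/
def phi (n : ℕ) : F2 →* H0 n :=
  FreeGroup.lift fun i =>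
    Multiplicative.ofAdd (if i = (0 : Fin 2) then ((1 : ZMod n), (0 : ZMod n)) else (0, 1))

/-- `R = ker φ`, the fundamental group of the open Fermat curve of exponent `n`. -/
abbrev R (n : ℕ) : Subgroup F2 := (phi n).ker

theorem pow_n_mem (n : ℕ) (x : F2) : x ^ n ∈ R n := by
  rw [MonoidHom.mem_ker, map_pow]
  have h : n • Multiplicative.toAdd (phi n x) = 0 := by
    ext <;> simp [ZMod.natCast_self]
  calc (phi n x) ^ n
      = Multiplicative.ofAdd (n • Multiplicative.toAdd (phi n x)) := by
        rw [ofAdd_nsmul, ofAdd_toAdd]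
    _ = 1 := by rw [h]; rfl

theorem commutator_mem (n : ℕ) (x y : F2) : ⁅x, y⁆ ∈ R n := by
  rw [MonoidHom.mem_ker, map_commutatorElement, commutatorElement_eq_one_iff_commute]
  exact Commute.all _ _

theorem conj_mem (n : ℕ) (g x : F2) (hx : x ∈ R n) : g * x * g⁻¹ ∈ R n :=
  Subgroup.Normal.conj_mem inferInstance x hx g

/-- The abelianization `R^{ab} = R/R'` of the fundamental group `R`. -/
abbrev Ab (n : ℕ) : Type := Abelianization ↥(R n)

/-- The class `[x] ∈ R^{ab}` of an element `x ∈ R`. -/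
def cls (n : ℕ) (x : F2) (hx : x ∈ R n) : Ab n := Abelianization.of ⟨x, hx⟩

/-- The class `[g x g⁻¹] ∈ R^{ab}`; for `h = φ(g) ∈ H₀` this is the value `h·[x]` of the
conjugation action of `H₀` on `R^{ab}`. -/
def conjCl (n : ℕ) (g x : F2) (hx : x ∈ R n) : Ab n :=
  cls n (g * x * g⁻¹) (conj_mem n g x hx)

/-- The endomorphism of `R^{ab}` induced by conjugation by `g ∈ F₂`; for `h = φ(g)` this
is the action of `h ∈ H₀` on `R^{ab}`. -/
def conjHom (n : ℕ) (g : F2) : Ab n →* Ab n :=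
  Abelianization.map (MulAut.conjNormal g).toMonoidHom


/-- The `ℤ`-submodule (= subgroup) `Γ ⊆ R^{ab}` generated by the `3n` classes
`βⁱ·[aⁿ] = [bⁱaⁿb⁻ⁱ]`, `αⁱ·[bⁿ] = [aⁱbⁿa⁻ⁱ]` and `αⁱ·[(ab)ⁿ] = [aⁱ(ab)ⁿa⁻ⁱ]`,
for `0 ≤ i ≤ n-1`. -/
def Gam (n : ℕ) : Subgroup (Ab n) :=
  Subgroup.closure {z : Ab n | ∃ i : Fin n,
    z = conjCl n (b ^ (i : ℕ)) (a ^ n) (pow_n_mem n a) ∨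
    z = conjCl n (a ^ (i : ℕ)) (b ^ n) (pow_n_mem n b) ∨
    z = conjCl n (a ^ (i : ℕ)) ((a * b) ^ n) (pow_n_mem n (a * b))}

/-!
The Fox derivative `∂/∂a` maps `R^{ab}` to `ℤ[H₀]`. It kills `αⁱ·[bⁿ]`, sends `βʲ·[aⁿ]` and
`αⁱ·[(ab)ⁿ]` to the sums of the cosets `βʲ⟨α⟩` and `αⁱ⟨αβ⟩`, and sends `αⁱβʲ·[[b,a]]` to
`αⁱβʲ(β - 1)`. For each index `(i₀, j₀)` there is an integer weight on `H₀` with zero sum over all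
these cosets whose `β`-differences on the index range are the indicator of `(i₀, j₀)`; pairing
with these weights shows that the classes are independent.

Conversely `R` is the normal closure of `aⁿ`, `bⁿ` and `[b,a]`, so modulo `Γ` the group `R^{ab}`
is spanned by the classes `y i j = αⁱβʲ·[[b,a]]`. Telescoping the words `aⁿ`, `bⁿ`, `(ab)ⁿ` and
`(ab)ⁿb⁻ⁿa⁻ⁿ` gives the relations `∑ᵢ y i j = 0`, `∑ⱼ y i j = 0`, `∑ₖ y (d + k) k = 0` and
`∑_{l < k < n} y k l = 0` modulo `Γ`, which express every `y i j` through those with `i ≤ n - 2`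
and `j ≤ n - 3`.
-/

open Finset

variable {n : ℕ}

section Classes

theorem cls_congr {x y : F2} (hx : x ∈ R n) (hy : y ∈ R n) (h : x = y) :
    cls n x hx = cls n y hy := by
  subst h; rfl

theorem cls_one : cls n 1 (one_mem _) = 1 := rfl

theorem cls_mul {x y : F2} (hx : x ∈ R n) (hy : y ∈ R n) :
    cls n (x * y) (mul_mem hx hy) = cls n x hx * cls n y hy := rfl

theorem cls_inv {x : F2} (hx : x ∈ R n) : cls n x⁻¹ (inv_mem hx) = (cls n x hx)⁻¹ := rfl

theorem cls_eq_conjCl_one {x : F2} (hx : x ∈ R n) : cls n x hx = conjCl n 1 x hx :=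
  cls_congr _ _ (by group)

theorem conjCl_congr (g : F2) {x y : F2} (hx : x ∈ R n) (hy : y ∈ R n) (h : x = y) :
    conjCl n g x hx = conjCl n g y hy := by
  subst h; rfl

theorem conjCl_one_right (g : F2) : conjCl n g 1 (one_mem _) = 1 :=
  (cls_congr _ (one_mem _) (by group)).trans cls_one

theorem conjCl_mul (g : F2) {x y : F2} (hx : x ∈ R n) (hy : y ∈ R n) :
    conjCl n g (x * y) (mul_mem hx hy) = conjCl n g x hx * conjCl n g y hy := by
  rw [conjCl, conjCl, conjCl, ← cls_mul]
  exact cls_congr _ _ (by group)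

theorem conjCl_inv (g : F2) {x : F2} (hx : x ∈ R n) :
    conjCl n g x⁻¹ (inv_mem hx) = (conjCl n g x hx)⁻¹ := by
  rw [conjCl, conjCl, ← cls_inv]
  exact cls_congr _ _ (by group)

theorem conjCl_mul_left (g h : F2) {x : F2} (hx : x ∈ R n) :
    conjCl n (g * h) x hx = conjCl n g (h * x * h⁻¹) (conj_mem n h x hx) :=
  cls_congr _ _ (by group)

theorem conjCl_of_mem_left {r : F2} (g : F2) (hr : r ∈ R n) {x : F2} (hx : x ∈ R n) :
    conjCl n (r * g) x hx = conjCl n g x hx :=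
  calc conjCl n (r * g) x hx
      = cls n r hr * conjCl n g x hx * (cls n r hr)⁻¹ :=
        cls_congr _ (mul_mem (mul_mem hr (conj_mem n g x hx)) (inv_mem hr)) (by group)
    _ = conjCl n g x hx := mul_inv_cancel_comm _ _

theorem conjCl_eq_of_phi_eq {g g' : F2} (h : phi n g = phi n g') {x : F2} (hx : x ∈ R n) :
    conjCl n g x hx = conjCl n g' x hx := by
  have hm : g * g'⁻¹ ∈ R n := by
    rw [MonoidHom.mem_ker, map_mul, map_inv, h, mul_inv_cancel]
  rw [← conjCl_of_mem_left g' hm, inv_mul_cancel_right]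

variable (n) in
def commutatorClass (i j : ℕ) : Additive (Ab n ⧸ Gam n) :=
  .ofMul (conjCl n (a ^ i * b ^ j) ⁅b, a⁆ (commutator_mem n b a))

theorem ofMul_mk_eq_zero {z : Ab n} (hz : z ∈ Gam n) :
    Additive.ofMul (z : Ab n ⧸ Gam n) = 0 :=
  congrArg Additive.ofMul ((QuotientGroup.eq_one_iff z).2 hz)

end Classes

section Phi

theorem phi_a : phi n a = Multiplicative.ofAdd (1, 0) := FreeGroup.lift_apply_of

theorem phi_b : phi n b = Multiplicative.ofAdd (0, 1) := FreeGroup.lift_apply_of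

theorem phi_aZpow_mul_bZpow (i j : ℤ) :
    phi n (a ^ i * b ^ j) = Multiplicative.ofAdd ((i : ZMod n), (j : ZMod n)) := by
  rw [map_mul, map_zpow, map_zpow, phi_a, phi_b, ← ofAdd_zsmul, ← ofAdd_zsmul, ← ofAdd_add]
  simp

theorem phi_aPow_mul_bPow (i j : ℕ) :
    phi n (a ^ i * b ^ j) = Multiplicative.ofAdd ((i : ZMod n), (j : ZMod n)) := by
  simpa using phi_aZpow_mul_bZpow (n := n) i j

theorem phi_mul_comm (g h : F2) : phi n (g * h) = phi n (h * g) := by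
  rw [map_mul, map_mul, mul_comm]

theorem phi_aPow_mod (i : ℕ) : phi n (a ^ i) = phi n (a ^ (i % n)) := by
  rw [map_pow, map_pow, pow_eq_pow_mod i ((map_pow _ _ _).symm.trans (pow_n_mem n a))]

theorem phi_bPow_mod (j : ℕ) : phi n (b ^ j) = phi n (b ^ (j % n)) := by
  rw [map_pow, map_pow, pow_eq_pow_mod j ((map_pow _ _ _).symm.trans (pow_n_mem n b))]

theorem exists_phi_eq [NeZero n] (g : F2) : ∃ i j : ℕ, phi n g = phi n (a ^ i * b ^ j) :=
  ⟨(Multiplicative.toAdd (phi n g)).1.val, (Multiplicative.toAdd (phi n g)).2.val, by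
    simp [phi_aPow_mul_bPow]⟩

end Phi

section NormalClosure

theorem exists_eq_aZpow_mul_bZpow {G : Type*} [Group G] (f : F2 →* G) (hc : f ⁅b, a⁆ = 1)
    (w : F2) : ∃ i j : ℤ, f w = f (a ^ i * b ^ j) := by
  have hcomm : Commute (f b) (f a) := by
    rwa [← commutatorElement_eq_one_iff_commute, ← map_commutatorElement]
  induction w using FreeGroup.induction_on with
  | C1 => exact ⟨0, 0, by simp⟩
  | of t =>
    fin_cases t
    · exact ⟨1, 0, by simp [a]⟩
    · exact ⟨0, 1, by simp [b]⟩
  | inv_of t ht =>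
    obtain ⟨i, j, h⟩ := ht
    refine ⟨-i, -j, ?_⟩
    simp only [map_inv, h, map_mul, map_zpow, mul_inv_rev, zpow_neg]
    exact (hcomm.zpow_zpow j i).inv_inv.eq
  | mul u v hu hv =>
    obtain ⟨i, j, hu⟩ := hu
    obtain ⟨i', j', hv⟩ := hv
    refine ⟨i + i', j + j', ?_⟩
    simp only [map_mul, hu, hv, map_zpow, zpow_add]
    rw [mul_assoc, ← mul_assoc (f b ^ j), (hcomm.zpow_zpow j i').eq]
    group

theorem R_le_of_mem {N : Subgroup F2} [N.Normal] (ha : a ^ n ∈ N) (hb : b ^ n ∈ N)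
    (hc : ⁅b, a⁆ ∈ N) : R n ≤ N := by
  intro w hw
  obtain ⟨i, j, h⟩ := exists_eq_aZpow_mul_bZpow ((QuotientGroup.mk' N).prod (phi n))
    (Prod.ext ((QuotientGroup.eq_one_iff _).2 hc) (commutator_mem n b a)) w
  obtain ⟨hN, hphi⟩ := Prod.ext_iff.1 h
  have hij : ((i : ZMod n), (j : ZMod n)) = 0 := by
    rw [← ofAdd_eq_one, ← phi_aZpow_mul_bZpow]
    exact hphi.symm.trans hw
  obtain ⟨⟨k, rfl⟩, ⟨l, rfl⟩⟩ : (n : ℤ) ∣ i ∧ (n : ℤ) ∣ j := by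
    simpa [ZMod.intCast_zmod_eq_zero_iff_dvd] using hij
  simp only [MonoidHom.prod_apply, QuotientGroup.mk'_apply] at hN
  rw [← QuotientGroup.eq_one_iff, hN, QuotientGroup.eq_one_iff, zpow_mul, zpow_mul, zpow_natCast,
    zpow_natCast]
  exact mul_mem (zpow_mem ha k) (zpow_mem hb l)

end NormalClosure

section GammaMembership

variable [NeZero n]

theorem conjCl_bPow_aPow_mem_Gam (j : ℕ) : conjCl n (b ^ j) (a ^ n) (pow_n_mem n a) ∈ Gam n := by
  rw [conjCl_eq_of_phi_eq (phi_bPow_mod j)]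
  exact Subgroup.subset_closure ⟨⟨j % n, Nat.mod_lt _ (NeZero.pos n)⟩, Or.inl rfl⟩

theorem conjCl_aPow_bPow_mem_Gam (i : ℕ) : conjCl n (a ^ i) (b ^ n) (pow_n_mem n b) ∈ Gam n := by
  rw [conjCl_eq_of_phi_eq (phi_aPow_mod i)]
  exact Subgroup.subset_closure ⟨⟨i % n, Nat.mod_lt _ (NeZero.pos n)⟩, Or.inr (Or.inl rfl)⟩

theorem conjCl_aPow_abPow_mem_Gam (i : ℕ) :
    conjCl n (a ^ i) ((a * b) ^ n) (pow_n_mem n (a * b)) ∈ Gam n := by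
  rw [conjCl_eq_of_phi_eq (phi_aPow_mod i)]
  exact Subgroup.subset_closure ⟨⟨i % n, Nat.mod_lt _ (NeZero.pos n)⟩, Or.inr (Or.inr rfl)⟩

theorem conjCl_aPow_mem_Gam (g : F2) : conjCl n g (a ^ n) (pow_n_mem n a) ∈ Gam n := by
  obtain ⟨i, j, h⟩ := exists_phi_eq (n := n) g
  rw [conjCl_eq_of_phi_eq (h.trans (phi_mul_comm _ _)), conjCl_mul_left,
    conjCl_congr _ _ (pow_n_mem n a) (by group)]
  exact conjCl_bPow_aPow_mem_Gam j

theorem conjCl_bPow_mem_Gam (g : F2) : conjCl n g (b ^ n) (pow_n_mem n b) ∈ Gam n := by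
  obtain ⟨i, j, h⟩ := exists_phi_eq (n := n) g
  rw [conjCl_eq_of_phi_eq h, conjCl_mul_left, conjCl_congr _ _ (pow_n_mem n b) (by group)]
  exact conjCl_aPow_bPow_mem_Gam i

end GammaMembership

section Fox

attribute [local instance] arrowAction arrowMulDistribMulAction

/-- The group ring `ℤ[H₀]`, as `ℤ`-valued functions on `H₀` written multiplicatively. -/
abbrev Chain (n : ℕ) : Type := H0 n → Multiplicative ℤ

abbrev Chain.of (h : H0 n) : Chain n := Pi.mulSingle h (Multiplicative.ofAdd 1)

noncomputable def translate (n : ℕ) : H0 n →* MulAut (Chain n) :=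
  MulDistribMulAction.toMulAut (H0 n) (Chain n)

/-- The Magnus embedding; `(magnus n w).left` is the Fox derivative `∂w/∂a`. -/
noncomputable def magnus (n : ℕ) : F2 →* Chain n ⋊[translate n] H0 n :=
  FreeGroup.lift fun i => if i = 0 then ⟨Chain.of 1, phi n a⟩ else .inr (phi n b)

theorem translate_apply (h : H0 n) (f : Chain n) (x : H0 n) :
    translate n h f x = f (h⁻¹ * x) := rfl

theorem translate_of (h x : H0 n) : translate n h (Chain.of x) = Chain.of (h * x) := by
  funext y
  simp only [translate_apply, Pi.mulSingle_apply, inv_mul_eq_iff_eq_mul]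

theorem magnus_a : magnus n a = ⟨Chain.of 1, phi n a⟩ := FreeGroup.lift_apply_of

theorem magnus_b : magnus n b = .inr (phi n b) := FreeGroup.lift_apply_of

theorem magnus_right (w : F2) : (magnus n w).right = phi n w := by
  have : SemidirectProduct.rightHom.comp (magnus n) = phi n := by
    refine FreeGroup.ext_hom _ _ fun i => ?_
    fin_cases i
    · exact congrArg SemidirectProduct.right (magnus_a (n := n))
    · exact congrArg SemidirectProduct.right (magnus_b (n := n))
  exact DFunLike.congr_fun this w

theorem magnus_conj_left (g : F2) {x : F2} (hx : x ∈ R n) :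
    (magnus n (g * x * g⁻¹)).left = translate n (phi n g) (magnus n x).left := by
  have hx1 : (magnus n x).right = 1 := (magnus_right x).trans hx
  simp [hx1, magnus_right]

theorem magnus_pow_left (w : F2) (k : ℕ) :
    (magnus n (w ^ k)).left = ∏ l ∈ range k, translate n (phi n w ^ l) (magnus n w).left := by
  induction k with
  | zero => simp
  | succ k ih =>
    rw [pow_succ, map_mul, SemidirectProduct.mul_left, ih, prod_range_succ, magnus_right, map_pow]

theorem magnus_a_left : (magnus n a).left = Chain.of 1 := by
  rw [magnus_a]

theorem magnus_ab_left : (magnus n (a * b)).left = Chain.of 1 := by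
  simp [magnus_a, magnus_b]

theorem magnus_commutator_left : (magnus n ⁅b, a⁆).left = Chain.of (phi n b) / Chain.of 1 := by
  simp [commutatorElement_def, magnus_a, magnus_b, translate_of, div_eq_mul_inv]

noncomputable def foxDeriv (n : ℕ) : Ab n →* Chain n :=
  Abelianization.lift
    { toFun r := (magnus n r).left
      map_one' := rfl
      map_mul' r s := by
        have hr : (magnus n r).right = 1 := (magnus_right _).trans r.2
        simp [hr] }

theorem foxDeriv_conjCl (g : F2) {x : F2} (hx : x ∈ R n) :
    foxDeriv n (conjCl n g x hx) = translate n (phi n g) (magnus n x).left :=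
  magnus_conj_left g hx

end Fox

section Weights

theorem natCast_eq_neg_one_iff {k : ℕ} (hk : k < n) : (k : ZMod n) = -1 ↔ k + 1 = n := by
  rw [eq_neg_iff_add_eq_zero, ← Nat.cast_one, ← Nat.cast_add, ZMod.natCast_eq_zero_iff]
  exact ⟨fun h => le_antisymm hk (Nat.le_of_dvd k.succ_pos h), fun h => h ▸ dvd_rfl⟩

variable [NeZero n]

theorem sum_range_eq_sum_zmod {M : Type*} [AddCommMonoid M] (f : ZMod n → M) :
    ∑ l ∈ range n, f l = ∑ x, f x :=
  sum_nbij' (fun l => (l : ZMod n)) ZMod.val (by simp) (by simp [ZMod.val_lt])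
    (fun l hl => ZMod.val_cast_of_lt (mem_range.1 hl)) (fun x _ => ZMod.natCast_zmod_val x)
    fun _ _ => rfl

def correctLastColumn (f : ZMod n → ZMod n → ℤ) (x y : ZMod n) : ℤ :=
  f x y - if y = -1 then ∑ k, f (x + 1 + k) k else 0

theorem sum_correctLastColumn_column (f : ZMod n → ZMod n → ℤ) (hf : ∀ y, ∑ x, f x y = 0)
    (y : ZMod n) : ∑ x, correctLastColumn f x y = 0 := by
  have hshift (k : ZMod n) : ∑ x, f (x + 1 + k) k = 0 := by
    rw [← hf k]
    exact Fintype.sum_equiv (Equiv.addRight (1 + k)) _ _ fun x => by simp [add_assoc]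
  simp only [correctLastColumn, sum_sub_distrib, hf]
  split_ifs
  · rw [sum_comm]; simp [hshift]
  · simp

theorem sum_correctLastColumn_diagonal (f : ZMod n → ZMod n → ℤ) (d : ZMod n) :
    ∑ k, correctLastColumn f (d + k) k = 0 := by
  simp only [correctLastColumn, sum_sub_distrib, sum_ite_eq', mem_univ, if_true,
    neg_add_cancel_right, sub_self]

-- The row `x = -1` balances the column sums; `correctLastColumn` then kills the diagonal sums
-- without touching the columns `y ≠ -1` where the `β`-differences are read off.
def dualWeight (p : Fin (n - 1) × Fin (n - 2)) : ZMod n → ZMod n → ℤ :=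
  correctLastColumn fun x y =>
    ((if x = (p.1 : ℕ) then 1 else 0) - if x = -1 then 1 else 0) *
      if (p.2 : ℕ) < y.val then 1 else 0

theorem sum_dualWeight_column (p : Fin (n - 1) × Fin (n - 2)) (y : ZMod n) :
    ∑ x, dualWeight p x y = 0 :=
  sum_correctLastColumn_column _ (fun y => by simp) y

theorem sum_dualWeight_diagonal (p : Fin (n - 1) × Fin (n - 2)) (d : ZMod n) :
    ∑ k, dualWeight p (d + k) k = 0 :=
  sum_correctLastColumn_diagonal _ d

theorem dualWeight_succ_sub (p q : Fin (n - 1) × Fin (n - 2)) :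
    dualWeight p (q.1 : ℕ) ((q.2 : ℕ) + 1) - dualWeight p (q.1 : ℕ) (q.2 : ℕ) =
      if p = q then 1 else 0 := by
  obtain ⟨⟨i, hi⟩, ⟨j, hj⟩⟩ := q
  obtain ⟨⟨i0, hi0⟩, ⟨j0, hj0⟩⟩ := p
  have hi1 : (i : ZMod n) = i0 ↔ i = i0 := by
    rw [ZMod.natCast_eq_natCast_iff', Nat.mod_eq_of_lt (by omega), Nat.mod_eq_of_lt (by omega)]
  have hj1 : (j : ZMod n) + 1 = ((j + 1 : ℕ) : ZMod n) := by push_cast; rfl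
  simp only [dualWeight, correctLastColumn, hj1, natCast_eq_neg_one_iff (show j < n by omega),
    natCast_eq_neg_one_iff (show j + 1 < n by omega), natCast_eq_neg_one_iff (show i < n by omega),
    ZMod.val_cast_of_lt (show j < n by omega), ZMod.val_cast_of_lt (show j + 1 < n by omega), hi1,
    Prod.mk.injEq, Fin.mk.injEq]
  split_ifs <;> omega

end Weights

section Independence

variable [NeZero n]

def pairing (U : H0 n → ℤ) : Chain n →* Multiplicative ℤ where
  toFun f := ∏ x, f x ^ U x
  map_one' := by simp
  map_mul' f g := by simp [mul_zpow, prod_mul_distrib]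

theorem pairing_of (U : H0 n → ℤ) (h : H0 n) : pairing U (Chain.of h) = .ofAdd (U h) := by
  simp [pairing, Pi.mulSingle_apply, ← ofAdd_zsmul]

theorem pairing_translate (U : H0 n → ℤ) (h : H0 n) (f : Chain n) :
    pairing U (translate n h f) = pairing (fun x => U (h * x)) f :=
  Fintype.prod_equiv (Equiv.mulLeft h⁻¹) _ _ fun x => by simp [translate_apply]

theorem pairing_translate_magnus_pow (U : H0 n → ℤ) (h : H0 n) {w : F2}
    (hw : (magnus n w).left = Chain.of 1) (k : ℕ) :
    pairing U (translate n h (magnus n (w ^ k)).left) =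
      .ofAdd (∑ l ∈ range k, U (h * phi n w ^ l)) := by
  rw [magnus_pow_left, hw, map_prod, map_prod, ofAdd_sum]
  refine prod_congr rfl fun l _ => ?_
  rw [translate_of, translate_of, pairing_of, mul_one]

noncomputable def dualCoord (p : Fin (n - 1) × Fin (n - 2)) : Ab n →* Multiplicative ℤ :=
  (pairing fun h => dualWeight p (Multiplicative.toAdd h).1 (Multiplicative.toAdd h).2).comp
    (foxDeriv n)

variable (p : Fin (n - 1) × Fin (n - 2))

theorem dualCoord_conjCl_aPow (j : ℕ) :
    dualCoord p (conjCl n (b ^ j) (a ^ n) (pow_n_mem n a)) = 1 := by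
  have hW (l : ℕ) :
      Multiplicative.toAdd (phi n (b ^ j) * phi n a ^ l) = ((l : ZMod n), (j : ZMod n)) := by
    simp [phi_a, phi_b]
  rw [dualCoord, MonoidHom.comp_apply, foxDeriv_conjCl,
    pairing_translate_magnus_pow _ _ magnus_a_left]
  simp only [hW]
  rw [sum_range_eq_sum_zmod (fun x => dualWeight p x j), sum_dualWeight_column]
  rfl

theorem dualCoord_conjCl_bPow (i : ℕ) :
    dualCoord p (conjCl n (a ^ i) (b ^ n) (pow_n_mem n b)) = 1 := by
  rw [dualCoord, MonoidHom.comp_apply, foxDeriv_conjCl, magnus_pow_left, magnus_b]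
  simp

theorem dualCoord_conjCl_abPow (d : ℕ) :
    dualCoord p (conjCl n (a ^ d) ((a * b) ^ n) (pow_n_mem n (a * b))) = 1 := by
  have hW (l : ℕ) : Multiplicative.toAdd (phi n (a ^ d) * phi n (a * b) ^ l) =
      ((d : ZMod n) + l, (l : ZMod n)) := by
    simp [phi_a, phi_b]
  rw [dualCoord, MonoidHom.comp_apply, foxDeriv_conjCl,
    pairing_translate_magnus_pow _ _ magnus_ab_left]
  simp only [hW]
  rw [sum_range_eq_sum_zmod (fun x => dualWeight p ((d : ZMod n) + x) x), sum_dualWeight_diagonal]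
  rfl

theorem dualCoord_conjCl_commutator (q : Fin (n - 1) × Fin (n - 2)) :
    dualCoord p (conjCl n (a ^ (q.1 : ℕ) * b ^ (q.2 : ℕ)) ⁅b, a⁆ (commutator_mem n b a)) =
      .ofAdd (if p = q then 1 else 0) := by
  rw [dualCoord, MonoidHom.comp_apply, foxDeriv_conjCl, magnus_commutator_left, pairing_translate,
    map_div, pairing_of, pairing_of, ← ofAdd_sub, ← dualWeight_succ_sub p q]
  simp [phi_a, phi_b]

theorem Gam_le_ker_dualCoord : Gam n ≤ (dualCoord p).ker := by
  rw [Gam, Subgroup.closure_le]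
  rintro z ⟨i, rfl | rfl | rfl⟩
  exacts [dualCoord_conjCl_aPow p i, dualCoord_conjCl_bPow p i, dualCoord_conjCl_abPow p i]

variable (n) in
noncomputable def dualFunctional :
    Additive (Ab n ⧸ Gam n) →ₗ[ℤ] (Fin (n - 1) × Fin (n - 2) → ℤ) :=
  LinearMap.pi fun p => (AddMonoidHom.toMultiplicativeRight.symm
    (QuotientGroup.lift (Gam n) (dualCoord p) (Gam_le_ker_dualCoord p))).toIntLinearMap

variable (n) in
theorem linearIndependent_commutatorClass :
    LinearIndependent ℤ fun q : Fin (n - 1) × Fin (n - 2) => commutatorClass n q.1 q.2 := by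
  refine LinearIndependent.of_comp (dualFunctional n) ?_
  have h : dualFunctional n ∘ (fun q => commutatorClass n q.1 q.2) = Pi.basisFun ℤ _ := by
    ext q p
    simp [dualFunctional, commutatorClass, dualCoord_conjCl_commutator, Pi.single_apply]
  exact h ▸ (Pi.basisFun ℤ _).linearIndependent

end Independence

section Relations

theorem mul_pow_mul_inv_pow_mem {x : F2} (hx : x ∈ R n) (g : F2) (k : ℕ) :
    (x * g) ^ k * (g ^ k)⁻¹ ∈ R n := by
  rw [MonoidHom.mem_ker] at hx ⊢
  simp [hx]

theorem prod_conjCl_mul_pow (w g : F2) {x : F2} (hx : x ∈ R n) (k : ℕ) :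
    ∏ i ∈ range k, conjCl n (w * g ^ i) x hx =
      conjCl n w ((x * g) ^ k * (g ^ k)⁻¹) (mul_pow_mul_inv_pow_mem hx g k) := by
  induction k with
  | zero => rw [prod_range_zero, conjCl_congr w _ (one_mem _) (by group), conjCl_one_right]
  | succ k ih =>
    rw [prod_range_succ, ih, conjCl_mul_left, ← conjCl_mul]
    exact conjCl_congr _ _ _ (by rw [pow_succ (x * g), pow_succ g]; group)

theorem prod_conjCl_bPow_commutator (w : F2) (k : ℕ) :
    ∏ l ∈ range k, conjCl n (w * b ^ l) ⁅b, a⁆ (commutator_mem n b a) =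
      conjCl n w ⁅b ^ k, a⁆ (commutator_mem n _ a) := by
  induction k with
  | zero => rw [prod_range_zero, conjCl_congr w _ (one_mem _) (by group), conjCl_one_right]
  | succ k ih =>
    rw [prod_range_succ, ih, conjCl_mul_left, mul_comm, ← conjCl_mul]
    exact conjCl_congr _ _ _ (by simp only [commutatorElement_def]; group)

theorem abPow_mul_inv_mem (k : ℕ) : (a * b) ^ k * (b ^ k)⁻¹ * (a ^ k)⁻¹ ∈ R n := by
  rw [MonoidHom.mem_ker]
  simp [mul_pow]

theorem cls_abPow_mul_inv (k : ℕ) :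
    cls n ((a * b) ^ k * (b ^ k)⁻¹ * (a ^ k)⁻¹) (abPow_mul_inv_mem k) =
      ∏ i ∈ range k, ∏ l ∈ range i, conjCl n (a ^ i * b ^ l) ⁅b, a⁆ (commutator_mem n b a) := by
  induction k with
  | zero => exact (cls_congr _ (one_mem _) (by group)).trans cls_one
  | succ k ih =>
    rw [prod_range_succ, ← ih, prod_conjCl_bPow_commutator, conjCl, ← cls_mul]
    refine cls_congr _ _ ?_
    rw [commutatorElement_def, pow_succ (a * b), pow_succ a, pow_succ b]
    group

variable [NeZero n]

theorem sum_commutatorClass_column (j : ℕ) : ∑ i ∈ range n, commutatorClass n i j = 0 := by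
  have hterm (i : ℕ) : conjCl n (a ^ i * b ^ j) ⁅b, a⁆ (commutator_mem n b a) =
      conjCl n (b ^ j * a ^ i) ⁅b, a⁆ (commutator_mem n b a) :=
    conjCl_eq_of_phi_eq (phi_mul_comm _ _) _
  simp only [commutatorClass, hterm, ← ofMul_prod, ← QuotientGroup.mk_prod, prod_conjCl_mul_pow]
  refine ofMul_mk_eq_zero ?_
  -- `([b,a] a)ⁿ a⁻ⁿ = (b aⁿ b⁻¹) a⁻ⁿ`
  have h := mul_mem (conjCl_aPow_mem_Gam (n := n) (b ^ j * b))
    (inv_mem (conjCl_aPow_mem_Gam (b ^ j)))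
  rw [conjCl_mul_left, ← conjCl_inv, ← conjCl_mul] at h
  convert h using 1
  exact conjCl_congr _ _ _ (by rw [commutatorElement_def, ← conj_pow]; group)

theorem sum_commutatorClass_row (i : ℕ) : ∑ j ∈ range n, commutatorClass n i j = 0 := by
  have hterm (j : ℕ) : conjCl n (a ^ i * b ^ j) ⁅b, a⁆ (commutator_mem n b a) =
      (conjCl n (a ^ i * b ^ j) ⁅a, b⁆ (commutator_mem n a b))⁻¹ := by
    rw [← conjCl_inv]
    exact conjCl_congr _ _ _ (commutatorElement_inv _ _).symm
  simp only [commutatorClass, hterm, prod_inv_distrib, ← ofMul_prod, ← QuotientGroup.mk_prod,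
    prod_conjCl_mul_pow]
  refine ofMul_mk_eq_zero (inv_mem ?_)
  -- `([a,b] b)ⁿ b⁻ⁿ = (a bⁿ a⁻¹) b⁻ⁿ`
  have h := mul_mem (conjCl_bPow_mem_Gam (n := n) (a ^ i * a))
    (inv_mem (conjCl_bPow_mem_Gam (a ^ i)))
  rw [conjCl_mul_left, ← conjCl_inv, ← conjCl_mul] at h
  convert h using 1
  exact conjCl_congr _ _ _ (by rw [commutatorElement_def, ← conj_pow]; group)

theorem sum_commutatorClass_diagonal (d : ℕ) :
    ∑ k ∈ range n, commutatorClass n (d + 1 + k) k = 0 := by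
  have hterm (k : ℕ) : conjCl n (a ^ (d + 1 + k) * b ^ k) ⁅b, a⁆ (commutator_mem n b a) =
      conjCl n (a ^ (d + 1) * (a * b) ^ k) ⁅b, a⁆ (commutator_mem n b a) := by
    refine conjCl_eq_of_phi_eq ?_ _
    simp only [map_mul, map_pow, mul_pow, pow_add, mul_assoc]
  simp only [commutatorClass, hterm, ← ofMul_prod, ← QuotientGroup.mk_prod, prod_conjCl_mul_pow]
  refine ofMul_mk_eq_zero ?_
  -- `([b,a] ab)ⁿ (ab)⁻ⁿ = (a⁻¹ (ab)ⁿ a) (ab)⁻ⁿ`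
  have h := mul_mem (conjCl_aPow_abPow_mem_Gam (n := n) d)
    (inv_mem (conjCl_aPow_abPow_mem_Gam (d + 1)))
  rw [show a ^ d = a ^ (d + 1) * a⁻¹ by group, conjCl_mul_left, ← conjCl_inv, ← conjCl_mul] at h
  convert h using 1
  exact conjCl_congr _ _ _ (by rw [commutatorElement_def, ← conj_pow]; group)

theorem sum_commutatorClass_triangle :
    ∑ i ∈ range n, ∑ l ∈ range i, commutatorClass n i l = 0 := by
  simp only [commutatorClass, ← ofMul_prod, ← QuotientGroup.mk_prod, ← cls_abPow_mul_inv]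
  refine ofMul_mk_eq_zero ?_
  have hmem {x : F2} (hx : x ∈ R n) (h : conjCl n 1 x hx ∈ Gam n) : cls n x hx ∈ Gam n :=
    cls_eq_conjCl_one hx ▸ h
  exact mul_mem (mul_mem (hmem _ (by simpa using conjCl_aPow_abPow_mem_Gam (n := n) 0))
    (inv_mem (hmem _ (conjCl_bPow_mem_Gam 1)))) (inv_mem (hmem _ (conjCl_aPow_mem_Gam 1)))

end Relations

section Spanning

open Submodule

theorem eq_zero_of_sum_column_eq_zero {M : Type*} [AddCommGroup M] (hn : 2 ≤ n)
    (y : ℕ → ℕ → M) (hper : ∀ i j, y i j = y (i % n) (j % n))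
    (hbase : ∀ i j, i + 1 < n → j + 2 < n → y i j = 0)
    (hcol : ∀ j, ∑ i ∈ range n, y i j = 0) (i j : ℕ) (hj : j + 2 < n) : y i j = 0 := by
  obtain ⟨m, rfl⟩ : ∃ m, n = m + 1 := ⟨n - 1, by omega⟩
  rw [hper, Nat.mod_eq_of_lt (show j < m + 1 by omega)]
  rcases Nat.lt_or_ge (i % (m + 1)) m with hi | hi
  · exact hbase _ _ (by omega) hj
  · have := hcol j
    rw [sum_range_succ, sum_eq_zero fun k hk => hbase k j (by simp at hk; omega) hj,
      zero_add] at this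
    rwa [show i % (m + 1) = m by have := Nat.mod_lt i (show 0 < m + 1 by omega); omega]

theorem eq_zero_of_relations {M : Type*} [AddCommGroup M] (hn : 2 ≤ n)
    (y : ℕ → ℕ → M) (hper : ∀ i j, y i j = y (i % n) (j % n))
    (hbase : ∀ i j, i + 1 < n → j + 2 < n → y i j = 0)
    (hcol : ∀ j, ∑ i ∈ range n, y i j = 0) (hrow : ∀ i, ∑ j ∈ range n, y i j = 0)
    (hdiag : ∀ d, ∑ k ∈ range n, y (d + 1 + k) k = 0)
    (htri : ∑ i ∈ range n, ∑ l ∈ range i, y i l = 0) (i j : ℕ) : y i j = 0 := by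
  have hleft (i j : ℕ) (hj : j + 2 < n) : y i j = 0 :=
    eq_zero_of_sum_column_eq_zero hn y hper hbase hcol i j hj
  obtain ⟨m, rfl⟩ : ∃ m, n = m + 2 := ⟨n - 2, by omega⟩
  -- Only the columns `m` and `m + 1` remain: the rows pair them, the diagonals make column `m`
  -- constant and the triangle relation kills its entry in row `m + 1`.
  have hsplit (f : ℕ → M) (hf : ∀ k < m, f k = 0) : ∑ k ∈ range (m + 2), f k = f m + f (m + 1) := by
    rw [sum_range_succ, sum_range_succ, sum_eq_zero fun k hk => hf k (by simpa using hk), zero_add]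
  have hshift (i j : ℕ) : y (i + (m + 2)) j = y i j := by
    rw [hper, Nat.add_mod_right, ← hper]
  have hpair (i : ℕ) : y i m + y i (m + 1) = 0 := by
    rw [← hsplit _ fun k hk => hleft i k (by omega), hrow]
  have hstep (i : ℕ) : y (i + 1) m = y i m := by
    have := hdiag (i + 1)
    rw [hsplit _ fun k hk => hleft _ k (by omega), show i + 1 + 1 + m = i + (m + 2) by omega,
      show i + 1 + 1 + (m + 1) = i + 1 + (m + 2) by omega, hshift, hshift] at this
    exact add_right_cancel ((hpair (i + 1)).trans this.symm)
  have hcorner : y (m + 1) m = 0 := by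
    rw [sum_range_succ, sum_range_succ (y (m + 1)),
      sum_eq_zero fun i hi => sum_eq_zero fun l hl => hleft i l (by simp at hi hl; omega),
      sum_eq_zero fun l hl => hleft _ l (by simp at hl; omega), zero_add, zero_add] at htri
    exact htri
  have hconst (i : ℕ) : y i m = y 0 m := by
    induction i with
    | zero => rfl
    | succ i ih => rw [hstep, ih]
  have hm (i : ℕ) : y i m = 0 := by
    rw [hconst, ← hconst (m + 1), hcorner]
  rw [hper]
  obtain h | h | h : j % (m + 2) < m ∨ j % (m + 2) = m ∨ j % (m + 2) = m + 1 := by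
    have := Nat.mod_lt j (show 0 < m + 2 by omega); omega
  · exact hleft _ _ (by omega)
  · rw [h, hm]
  · simpa [h, hm] using hpair (i % (m + 2))

theorem commutatorClass_mod (i j : ℕ) :
    commutatorClass n i j = commutatorClass n (i % n) (j % n) := by
  rw [commutatorClass, commutatorClass, conjCl_eq_of_phi_eq]
  rw [map_mul, map_mul, phi_aPow_mod, phi_bPow_mod]

theorem eq_top_of_conjCl_mem (V : Submodule ℤ (Additive (Ab n ⧸ Gam n)))
    (ha : ∀ g, Additive.ofMul (conjCl n g (a ^ n) (pow_n_mem n a) : Ab n ⧸ Gam n) ∈ V)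
    (hb : ∀ g, Additive.ofMul (conjCl n g (b ^ n) (pow_n_mem n b) : Ab n ⧸ Gam n) ∈ V)
    (hc : ∀ g, Additive.ofMul (conjCl n g ⁅b, a⁆ (commutator_mem n b a) : Ab n ⧸ Gam n) ∈ V) :
    V = ⊤ := by
  let K : Subgroup F2 := ((AddSubgroup.toSubgroup' V.toAddSubgroup).comap
    ((QuotientGroup.mk' (Gam n)).comp Abelianization.of)).map (R n).subtype
  have hK (g : F2) {x : F2} (hx : x ∈ R n)
      (h : Additive.ofMul (conjCl n g x hx : Ab n ⧸ Gam n) ∈ V) : g * x * g⁻¹ ∈ K :=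
    ⟨⟨_, conj_mem n g x hx⟩, h, rfl⟩
  have hR : R n ≤ K.normalCore :=
    R_le_of_mem (fun g => hK g _ (ha g)) (fun g => hK g _ (hb g)) (fun g => hK g _ (hc g))
  refine eq_top_iff.2 fun z _ => ?_
  obtain ⟨w, hw⟩ := QuotientGroup.mk_surjective z.toMul
  rw [← ofMul_toMul z, ← hw]
  refine QuotientGroup.induction_on w fun r => ?_
  obtain ⟨r', hr', e⟩ := K.normalCore_le (hR r.2)
  obtain rfl : r' = r := Subtype.ext e
  exact hr'

variable [NeZero n]

theorem commutatorClass_mem_span (hn : 2 ≤ n) (i j : ℕ) :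
    commutatorClass n i j ∈ span ℤ (Set.range fun q : Fin (n - 1) × Fin (n - 2) =>
      commutatorClass n q.1 q.2) := by
  set V := span ℤ (Set.range fun q : Fin (n - 1) × Fin (n - 2) => commutatorClass n q.1 q.2)
  rw [← Quotient.mk_eq_zero, ← mkQ_apply]
  refine eq_zero_of_relations hn (fun i j => V.mkQ (commutatorClass n i j)) (fun i j => ?_)
    (fun i j hi hj => ?_) (fun j => ?_) (fun i => ?_) (fun d => ?_) ?_ i j
  · rw [commutatorClass_mod]
  · rw [mkQ_apply, Quotient.mk_eq_zero]
    exact subset_span ⟨(⟨i, by omega⟩, ⟨j, by omega⟩), rfl⟩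
  · rw [← map_sum, sum_commutatorClass_column, map_zero]
  · rw [← map_sum, sum_commutatorClass_row, map_zero]
  · rw [← map_sum, sum_commutatorClass_diagonal, map_zero]
  · simp only [← map_sum, sum_commutatorClass_triangle, map_zero]

theorem span_commutatorClass_eq_top (hn : 2 ≤ n) :
    span ℤ (Set.range fun q : Fin (n - 1) × Fin (n - 2) => commutatorClass n q.1 q.2) = ⊤ := by
  refine eq_top_of_conjCl_mem _ (fun g => ?_) (fun g => ?_) fun g => ?_
  · rw [ofMul_mk_eq_zero (conjCl_aPow_mem_Gam g)]
    exact zero_mem _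
  · rw [ofMul_mk_eq_zero (conjCl_bPow_mem_Gam g)]
    exact zero_mem _
  · obtain ⟨i, j, h⟩ := exists_phi_eq (n := n) g
    rw [conjCl_eq_of_phi_eq h]
    exact commutatorClass_mem_span hn i j

end Spanning

/-- the `(n-1)(n-2)` classes `(αⁱβʲ)·[[b,a]] mod Γ`, for `0 ≤ i ≤ n-2`
and `0 ≤ j ≤ n-3`, form a `ℤ`-basis of `R^{ab}/Γ` (the first homology of the closed
Fermat curve of exponent `n`). -/
theorem statement7 (n : ℕ) (hn : 2 ≤ n) :
    ∃ B : Module.Basis (Fin (n - 1) × Fin (n - 2)) ℤ (Additive (Ab n ⧸ Gam n)),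
      ∀ p : Fin (n - 1) × Fin (n - 2), B p =
        Additive.ofMul (QuotientGroup.mk
          (conjCl n (a ^ (p.1 : ℕ) * b ^ (p.2 : ℕ)) ⁅b, a⁆ (commutator_mem n b a))) := by
  have : NeZero n := ⟨by omega⟩
  exact ⟨.mk (linearIndependent_commutatorClass n) (span_commutatorClass_eq_top hn).ge,
    fun p => Module.Basis.mk_apply _ _ _⟩

end Fermat
end

section
/- The abelianization R^{ab} = R_{k,s−1}/R_{k,s−1}' is generated as a ℤ-module by the classes of the following elements, taken over all multi-indices 𝐢 = (i₁,…,i_{s−1}) with 0 ≤ i_j ≤ k−1: (x_{s−1}^k)^(x_{1,s−2}^𝐢); (x_ν^k)^(x_{1,ν−1}^𝐢 · x_{ν+1,s−1}^𝐢) for 1 ≤ ν ≤ s−2; and [x_j, x_ν]^(x_{1,s−1}^𝐢) for 1 ≤ ν < j ≤ s−1. -/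
/-!
`R` is the kernel of `F → (ℤ/kℤ)^{s-1}`, so it is normally generated by the relators `x_j^k` and
`[x_i, x_j]`, and `R^{ab}` is generated by the classes of their conjugates `g r g⁻¹`. Conjugation
by `R` is trivial on `R^{ab}`, so such a class depends only on `φ(g)`, which is `φ(x_{1,s-1}^𝐢)`
for some `𝐢`. Modulo `R`, the factor `x_ν^{i_ν}` can be moved to the end of `x_{1,s-1}^𝐢`, where
it commutes with `x_ν^k`; this gives the first two families. For commutators, `[x_ν, x_ν] = 1`
and `[x_ν, x_j] = [x_j, x_ν]⁻¹`.
-/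

namespace GenFermat

open scoped commutatorElement

/-- The free group `F_{s-1}` on `s-1` generators `x₁, …, x_{s-1}`
(indexed in Lean by `Fin (s-1)`, so that the mathematical generator `x_m` is
`FreeGroup.of ⟨m-1, _⟩`). -/
abbrev FG (s : ℕ) : Type := FreeGroup (Fin (s - 1))

/-- The generator `x_{t+1}` (Lean index `t : ℕ`, `t < s-1`); junk value `1` otherwise. -/
def x (s : ℕ) (t : ℕ) : FG s := if h : t < s - 1 then FreeGroup.of ⟨t, h⟩ else 1

/-- The group `(ℤ/kℤ)^{s-1}`, written multiplicatively. -/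
abbrev HG (s k : ℕ) : Type := Multiplicative (Fin (s - 1) → ZMod k)

/-- The homomorphism `φ : F_{s-1} → (ℤ/kℤ)^{s-1}` sending `x_j` to the `j`-th standard
generator. -/
def phi (s k : ℕ) : FG s →* HG s k :=
  FreeGroup.lift fun j => Multiplicative.ofAdd (Pi.single j 1)

/-- `R_{k,s-1} = ker φ`, the fundamental group of the open generalized Fermat curve of
type `(k, s-1)`. -/
abbrev R (s k : ℕ) : Subgroup (FG s) := (phi s k).ker

theorem pow_k_mem (s k : ℕ) (g : FG s) : g ^ k ∈ R s k := by
  rw [MonoidHom.mem_ker, map_pow]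
  have h : k • Multiplicative.toAdd (phi s k g) = 0 := by
    funext t
    simp [ZMod.natCast_self]
  calc (phi s k g) ^ k
      = Multiplicative.ofAdd (k • Multiplicative.toAdd (phi s k g)) := by
        rw [ofAdd_nsmul, ofAdd_toAdd]
    _ = 1 := by rw [h]; rfl

theorem commutator_mem (s k : ℕ) (g h : FG s) : ⁅g, h⁆ ∈ R s k := by
  rw [MonoidHom.mem_ker, map_commutatorElement, commutatorElement_eq_one_iff_commute]
  exact Commute.all _ _

theorem conj_mem (s k : ℕ) (g w : FG s) (hw : w ∈ R s k) : g * w * g⁻¹ ∈ R s k :=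
  Subgroup.Normal.conj_mem inferInstance w hw g

/-- The ordered product `x_{lo+1}^{e(lo)} x_{lo+2}^{e(lo+1)} ⋯ x_{hi}^{e(hi-1)}`
(Lean indices in `[lo, hi)`); for a multi-index `𝐢` this realizes the element
`x_{ℓ₁,ℓ₂}^𝐢 = x_{ℓ₁}^{i_{ℓ₁}} ⋯ x_{ℓ₂}^{i_{ℓ₂}}` with `lo = ℓ₁ - 1`, `hi = ℓ₂`
(and equals `1` when `ℓ₁ > ℓ₂`). -/
def segN (s : ℕ) (e : ℕ → ℕ) (lo hi : ℕ) : FG s :=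
  ((List.range' lo (hi - lo)).map fun t => x s t ^ e t).prod

/-- The exponent function of a multi-index `𝐢 : Fin (s-1) → Fin k`. -/
def eI (s k : ℕ) (I : Fin (s - 1) → Fin k) : ℕ → ℕ :=
  fun t => if h : t < s - 1 then (I ⟨t, h⟩ : ℕ) else 0

/-- The abelianization `R^{ab} = R_{k,s-1}/R_{k,s-1}'`. -/
abbrev Ab (s k : ℕ) : Type := Abelianization ↥(R s k)

/-- The class `[w] ∈ R^{ab}` of an element `w ∈ R_{k,s-1}`. -/
def cls (s k : ℕ) (w : FG s) (hw : w ∈ R s k) : Ab s k := Abelianization.of ⟨w, hw⟩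

/-- The class `[g w g⁻¹] ∈ R^{ab}`; for `h = φ(g) ∈ H` this is the value `h·[w]` of the
conjugation action of `H = (ℤ/kℤ)^{s-1}` on `R^{ab}`. -/
def conjCl (s k : ℕ) (g w : FG s) (hw : w ∈ R s k) : Ab s k :=
  cls s k (g * w * g⁻¹) (conj_mem s k g w hw)

/-- The inclusion `Fin (s-2) → Fin (s-1)`. -/
def cast2 (s : ℕ) : Fin (s - 2) → Fin (s - 1) :=
  Fin.castLE (Nat.sub_le_sub_left one_le_two s)


end GenFermat

open scoped commutatorElement

namespace FreeGroup

def powCommRelators (ι : Type*) (k : ℕ) : Set (FreeGroup ι) :=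
  Set.range (fun i => of i ^ k) ∪ Set.range (fun p : ι × ι => ⁅of p.1, of p.2⁆)

/-- Modulo the relators, `v ↦ ∏ᵢ (of i) ^ vᵢ` is a well-defined homomorphism out of `(ℤ/kℤ)^ι`
splitting the quotient map. -/
theorem ker_lift_single_le_normalClosure {ι : Type*} [Fintype ι] [DecidableEq ι] (k : ℕ) :
    (lift fun i : ι => Multiplicative.ofAdd (Pi.single i (1 : ZMod k))).ker ≤
      Subgroup.normalClosure (powCommRelators ι k) := by
  set N := Subgroup.normalClosure (powCommRelators ι k)
  let a (i : ι) : FreeGroup ι ⧸ N := of i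
  have ha_pow (i : ι) : a i ^ k = 1 :=
    (QuotientGroup.eq_one_iff _).2 (Subgroup.subset_normalClosure (Or.inl ⟨i, rfl⟩))
  have ha_comm (i j : ι) : Commute (a i) (a j) := by
    have h := (QuotientGroup.eq_one_iff _).2
      (Subgroup.subset_normalClosure (Or.inr ⟨(i, j), rfl⟩) : ⁅of i, of j⁆ ∈ N)
    rwa [← QuotientGroup.mk'_apply, map_commutatorElement,
      commutatorElement_eq_one_iff_commute] at h
  let cyc (i : ι) : ZMod k →+ Additive (FreeGroup ι ⧸ N) :=
    ZMod.lift k ⟨zmultiplesHom _ (Additive.ofMul (a i)), by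
      rw [zmultiplesHom_apply, natCast_zsmul, ← ofMul_pow, ha_pow, ofMul_one]⟩
  have hcomm : Pairwise fun i j => ∀ x y, AddCommute (cyc i x) (cyc j y) := by
    intro i j _ x y
    obtain ⟨m, rfl⟩ := ZMod.intCast_surjective x
    obtain ⟨n, rfl⟩ := ZMod.intCast_surjective y
    simp only [cyc, ZMod.lift_coe, zmultiplesHom_apply, ← ofMul_zpow]
    exact (ha_comm i j).zpow_zpow m n
  let ψ := AddMonoidHom.toMultiplicativeLeft (AddMonoidHom.noncommPiCoprod cyc hcomm)
  have hψ : ψ.comp (lift fun i : ι => Multiplicative.ofAdd (Pi.single i (1 : ZMod k))) =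
      QuotientGroup.mk' N := by
    ext i
    simp [ψ, cyc, a, ← Int.cast_one (R := ZMod k), -Int.cast_one]
  intro w hw
  rw [MonoidHom.mem_ker] at hw
  rw [← QuotientGroup.eq_one_iff, ← QuotientGroup.mk'_apply, ← hψ, MonoidHom.comp_apply, hw,
    _root_.map_one]

end FreeGroup

namespace Abelianization

variable {G : Type*} [Group G] {N : Subgroup G} [N.Normal]

theorem of_conjNormal_eq_of_inv_mul_mem {g g' : G} (h : g⁻¹ * g' ∈ N) (n : N) :
    of (MulAut.conjNormal g n) = of (MulAut.conjNormal g' n) := by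
  set r : N := ⟨g⁻¹ * g', h⟩
  have hr : MulAut.conjNormal (r : G) n = r * n * r⁻¹ := Subtype.ext (MulAut.conjNormal_apply _ _)
  have hg' : g' = g * r := by simp [r]
  rw [hg', map_mul, MulAut.mul_apply, hr, map_mul, map_mul, map_inv, map_mul, map_mul, map_inv,
    mul_inv_cancel_comm]

theorem closure_eq_top_of_conjNormal_mem {B : Set G} (hB : B ⊆ N)
    (hN : N ≤ Subgroup.normalClosure B) {S : Set (Abelianization N)}
    (hS : ∀ (g b : G) (hb : b ∈ B), of (MulAut.conjNormal g ⟨b, hB hb⟩) ∈ Subgroup.closure S) :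
    Subgroup.closure S = ⊤ := by
  set K := ((Subgroup.closure S).comap of).map N.subtype
  have hNK : Subgroup.normalClosure B ≤ K := by
    refine Subgroup.closure_le _ |>.2 fun c hc ↦ ?_
    obtain ⟨b, hb, hbc⟩ := Group.mem_conjugatesOfSet_iff.1 hc
    obtain ⟨g, rfl⟩ := isConj_iff.1 hbc
    exact ⟨MulAut.conjNormal g ⟨b, hB hb⟩, hS g b hb, rfl⟩
  rw [eq_top_iff]
  rintro z -
  obtain ⟨n, rfl⟩ := QuotientGroup.mk_surjective z
  exact (Subgroup.mem_map_iff_mem N.subtype_injective).1 (hNK (hN n.2))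

end Abelianization

namespace GenFermat

variable (s k : ℕ)

lemma x_eq_of (j : Fin (s - 1)) : x s j = FreeGroup.of j := by
  rw [x, dif_pos j.isLt]

lemma phi_of (j : Fin (s - 1)) :
    phi s k (FreeGroup.of j) = Multiplicative.ofAdd (Pi.single j 1) :=
  FreeGroup.lift_apply_of

lemma powCommRelators_subset_R : FreeGroup.powCommRelators (Fin (s - 1)) k ⊆ R s k := by
  rintro _ (⟨i, rfl⟩ | ⟨⟨i, j⟩, rfl⟩)
  exacts [pow_k_mem s k _, commutator_mem s k _ _]

lemma R_le_normalClosure : R s k ≤ Subgroup.normalClosure (FreeGroup.powCommRelators _ k) :=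
  FreeGroup.ker_lift_single_le_normalClosure k

lemma conjCl_congr {g w w' : FG s} (hw : w ∈ R s k) (hw' : w' ∈ R s k) (h : w = w') :
    conjCl s k g w hw = conjCl s k g w' hw' := by
  subst h; rfl

lemma conjCl_eq_of_conjNormal (g w : FG s) (hw : w ∈ R s k) :
    conjCl s k g w hw = Abelianization.of (MulAut.conjNormal g ⟨w, hw⟩) :=
  rfl

lemma conjCl_one (g : FG s) : conjCl s k g 1 (one_mem _) = 1 :=
  (congrArg Abelianization.of (map_one (MulAut.conjNormal g))).trans (map_one _)

lemma conjCl_inv (g w : FG s) (hw : w ∈ R s k) :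
    conjCl s k g w⁻¹ (inv_mem hw) = (conjCl s k g w hw)⁻¹ :=
  (congrArg Abelianization.of (map_inv (MulAut.conjNormal g) ⟨w, hw⟩)).trans (map_inv _ _)

lemma conjCl_congr_of_phi_eq {g g' w : FG s} (h : phi s k g = phi s k g') (hw : w ∈ R s k) :
    conjCl s k g w hw = conjCl s k g' w hw := by
  rw [conjCl_eq_of_conjNormal, conjCl_eq_of_conjNormal]
  exact Abelianization.of_conjNormal_eq_of_inv_mul_mem ((MonoidHom.eq_iff _).1 h.symm) _

lemma conjCl_mul_pow_pow (g : FG s) (t e : ℕ) :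
    conjCl s k (g * x s t ^ e) (x s t ^ k) (pow_k_mem s k _)
      = conjCl s k g (x s t ^ k) (pow_k_mem s k _) := by
  simp only [conjCl_eq_of_conjNormal, map_mul, MulAut.mul_apply]
  congr 2
  exact Subtype.ext ((Commute.pow_pow_self (x s t) e k).mul_inv_cancel)

lemma segN_split (e : ℕ → ℕ) {lo mid hi : ℕ} (h₁ : lo ≤ mid) (h₂ : mid ≤ hi) :
    segN s e lo hi = segN s e lo mid * segN s e mid hi := by
  have h := List.range'_append (s := lo) (m := mid - lo) (n := hi - mid) (step := 1)
  rw [one_mul, Nat.add_sub_cancel' h₁] at h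
  rw [segN, segN, segN, ← List.prod_append, ← List.map_append, h,
    add_comm, Nat.sub_add_sub_cancel h₂ h₁]

lemma segN_self (e : ℕ → ℕ) (t : ℕ) : segN s e t t = 1 := by
  simp [segN]

lemma segN_succ (e : ℕ → ℕ) {lo hi : ℕ} (h : lo ≤ hi) :
    segN s e lo (hi + 1) = segN s e lo hi * x s hi ^ e hi := by
  rw [segN_split s e h hi.le_succ]
  simp [segN]

lemma toAdd_phi_segN (e : ℕ → ℕ) {n : ℕ} (hn : n ≤ s - 1) (j : Fin (s - 1)) :
    (phi s k (segN s e 0 n)).toAdd j = if (j : ℕ) < n then (e j : ZMod k) else 0 := by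
  induction n with
  | zero => simp [segN_self]
  | succ n ih =>
    have hx : x s n = FreeGroup.of ⟨n, by omega⟩ := x_eq_of s ⟨n, by omega⟩
    rw [segN_succ s e n.zero_le, map_mul, map_pow, hx, phi_of, toAdd_mul, toAdd_pow,
      toAdd_ofAdd, Pi.add_apply, ih (by omega), Pi.smul_apply, Pi.single_apply]
    rcases lt_trichotomy (j : ℕ) n with hj | hj | hj
    · simp [Fin.ext_iff, hj, hj.ne, Nat.lt_succ_of_lt hj]
    · simp [Fin.ext_iff, hj]
    · simp [Fin.ext_iff, hj.ne', show ¬(j : ℕ) < n by omega, show ¬(j : ℕ) ≤ n by omega]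

lemma exists_phi_segN_eq [NeZero k] (g : FG s) :
    ∃ I : Fin (s - 1) → Fin k, phi s k (segN s (eI s k I) 0 (s - 1)) = phi s k g := by
  refine ⟨fun j => ⟨((phi s k g).toAdd j).val, ZMod.val_lt _⟩, ?_⟩
  apply Multiplicative.toAdd.injective
  funext j
  rw [toAdd_phi_segN s k _ le_rfl, if_pos j.isLt, eI, dif_pos j.isLt]
  exact ZMod.natCast_zmod_val _

def generators : Set (Ab s k) :=
  {z : Ab s k |
      (∃ I : Fin (s - 1) → Fin k,
        z = conjCl s k (segN s (eI s k I) 0 (s - 2)) ((x s (s - 2)) ^ k)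
            (pow_k_mem s k _)) ∨
      (∃ (ν : Fin (s - 2)) (I : Fin (s - 1) → Fin k),
        z = conjCl s k (segN s (eI s k I) 0 (ν : ℕ) * segN s (eI s k I) ((ν : ℕ) + 1) (s - 1))
            ((x s (ν : ℕ)) ^ k) (pow_k_mem s k _)) ∨
      (∃ (ν' t : Fin (s - 1)) (I : Fin (s - 1) → Fin k), (ν' : ℕ) < (t : ℕ) ∧
        z = conjCl s k (segN s (eI s k I) 0 (s - 1)) ⁅x s (t : ℕ), x s (ν' : ℕ)⁆
            (commutator_mem s k _ _))}

lemma conjCl_pow_mem_closure [NeZero k] (g : FG s) (ν : Fin (s - 1)) :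
    conjCl s k g (x s ν ^ k) (pow_k_mem s k _) ∈ Subgroup.closure (generators s k) := by
  obtain ⟨I, hI⟩ := exists_phi_segN_eq s k g
  set e := eI s k I
  have hφ : phi s k g = phi s k (segN s e 0 ν * segN s e (ν + 1) (s - 1) * x s ν ^ e ν) := by
    rw [← hI, segN_split s e (Nat.zero_le (ν + 1)) ν.isLt, segN_succ s e (Nat.zero_le ν),
      map_mul, map_mul, map_mul, map_mul, mul_right_comm]
  rw [conjCl_congr_of_phi_eq s k hφ, conjCl_mul_pow_pow]
  rcases Nat.lt_or_ge ν (s - 2) with hν | hν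
  · exact Subgroup.subset_closure (Or.inr (Or.inl ⟨⟨ν, hν⟩, I, rfl⟩))
  · rw [show (ν : ℕ) + 1 = s - 1 by omega, segN_self, mul_one, show (ν : ℕ) = s - 2 by omega]
    exact Subgroup.subset_closure (Or.inl ⟨I, rfl⟩)

lemma conjCl_commutator_mem_closure [NeZero k] (g : FG s) (i j : Fin (s - 1)) :
    conjCl s k g ⁅x s i, x s j⁆ (commutator_mem s k _ _) ∈ Subgroup.closure (generators s k) := by
  obtain ⟨I, hI⟩ := exists_phi_segN_eq s k g
  rw [← conjCl_congr_of_phi_eq s k hI]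
  rcases lt_trichotomy j i with h | rfl | h
  · exact Subgroup.subset_closure (Or.inr (Or.inr ⟨j, i, I, h, rfl⟩))
  · rw [conjCl_congr s k _ (one_mem _) (commutatorElement_self _), conjCl_one]
    exact one_mem _
  · rw [conjCl_congr s k _ (inv_mem (commutator_mem s k _ _)) (commutatorElement_inv _ _).symm,
      conjCl_inv s k _ _ (commutator_mem s k _ _)]
    exact inv_mem (Subgroup.subset_closure (Or.inr (Or.inr ⟨i, j, I, h, rfl⟩)))

lemma conjCl_relator_mem_closure [NeZero k] (g b : FG s)
    (hb : b ∈ FreeGroup.powCommRelators (Fin (s - 1)) k) :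
    conjCl s k g b (powCommRelators_subset_R s k hb) ∈ Subgroup.closure (generators s k) := by
  rcases hb with ⟨ν, rfl⟩ | ⟨⟨i, j⟩, rfl⟩
  · rw [conjCl_congr s k _ (pow_k_mem s k _) (congrArg (· ^ k) (x_eq_of s ν).symm)]
    exact conjCl_pow_mem_closure s k g ν
  · rw [conjCl_congr s k _ (commutator_mem s k _ _)
      (congrArg₂ (⁅·, ·⁆) (x_eq_of s i).symm (x_eq_of s j).symm)]
    exact conjCl_commutator_mem_closure s k g i j

theorem statement14_general (s k : ℕ) (hk : 2 ≤ k) :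
    Subgroup.closure {z : Ab s k |
      (∃ I : Fin (s - 1) → Fin k,
        z = conjCl s k (segN s (eI s k I) 0 (s - 2)) ((x s (s - 2)) ^ k)
            (pow_k_mem s k _)) ∨
      (∃ (ν : Fin (s - 2)) (I : Fin (s - 1) → Fin k),
        z = conjCl s k (segN s (eI s k I) 0 (ν : ℕ) * segN s (eI s k I) ((ν : ℕ) + 1) (s - 1))
            ((x s (ν : ℕ)) ^ k) (pow_k_mem s k _)) ∨
      (∃ (ν' t : Fin (s - 1)) (I : Fin (s - 1) → Fin k), (ν' : ℕ) < (t : ℕ) ∧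
        z = conjCl s k (segN s (eI s k I) 0 (s - 1)) ⁅x s (t : ℕ), x s (ν' : ℕ)⁆
            (commutator_mem s k _ _))} = ⊤ := by
  have : NeZero k := ⟨by omega⟩
  exact Abelianization.closure_eq_top_of_conjNormal_mem (powCommRelators_subset_R s k)
    (R_le_normalClosure s k) (conjCl_relator_mem_closure s k)

/-- `R^{ab}` is generated as a `ℤ`-module (equivalently, as a group,
since it is abelian) by the classes of `(x_{s-1}^k)^(x_{1,s-2}^𝐢)`,
`(x_ν^k)^(x_{1,ν-1}^𝐢 · x_{ν+1,s-1}^𝐢)` for `1 ≤ ν ≤ s-2`, and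
`[x_j, x_ν]^(x_{1,s-1}^𝐢)` for `1 ≤ ν < j ≤ s-1`, over all multi-indices `𝐢`.
(Lean indices are shifted by one: `ν : Fin (s-2)` and `ν', t : Fin (s-1)` below are the
mathematical `ν+1`, `ν'+1`, `j = t+1`, and `x^y = y x y⁻¹`.) -/
theorem statement14 (s k : ℕ) (hs : 3 ≤ s) (hk : 2 ≤ k) :
    Subgroup.closure {z : Ab s k |
      (∃ I : Fin (s - 1) → Fin k,
        z = conjCl s k (segN s (eI s k I) 0 (s - 2)) ((x s (s - 2)) ^ k)
            (pow_k_mem s k _)) ∨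
      (∃ (ν : Fin (s - 2)) (I : Fin (s - 1) → Fin k),
        z = conjCl s k (segN s (eI s k I) 0 (ν : ℕ) * segN s (eI s k I) ((ν : ℕ) + 1) (s - 1))
            ((x s (ν : ℕ)) ^ k) (pow_k_mem s k _)) ∨
      (∃ (ν' t : Fin (s - 1)) (I : Fin (s - 1) → Fin k), (ν' : ℕ) < (t : ℕ) ∧
        z = conjCl s k (segN s (eI s k I) 0 (s - 1)) ⁅x s (t : ℕ), x s (ν' : ℕ)⁆
            (commutator_mem s k _ _))} = ⊤ :=
  statement14_general s k hk

end GenFermat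
end
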